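/- Let φ be an order automorphism of (E, E₊) and suppose a, b, c, d are integers such that φ(r, x, y) = ((2 + √3)r, ax + by, cx + dy) for all (r, x, y) ∈ E. Then the matrix (a b; c d) is congruent modulo 9 to one of the three matrices (2 3; 1 2), (2 3; 4 2), (2 3; 7 2). -/
import Mathlib


/-- The additive subgroup `E` of `ℝ × ℤ × ℤ`: all triples `(r, x, y)` such that
`r = (j + k√3)/5^(6i)`, `x ≡ j (mod 9)` and `y ≡ k (mod 3)` for some integers `i, j, k`. -/
def Eset : Set (ℝ × ℤ × ℤ) :=
  {p | ∃ i j k : ℤ, p.1 = ((j : ℝ) + (k : ℝ) * Real.sqrt 3) / (5 : ℝ) ^ (6 * i) ∧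
    p.2.1 ≡ j [ZMOD 9] ∧ p.2.2 ≡ k [ZMOD 3]}


lemma sqrt3_irr : Irrational (Real.sqrt 3) := by
  simpa using (Nat.prime_three).irrational_sqrt

lemma sqrt3_rat (A B : ℚ) (h : (A : ℝ) = (B : ℝ) * Real.sqrt 3) : A = 0 ∧ B = 0 := by
  by_cases hB : B = 0
  · subst hB
    simp at h
    exact ⟨by exact_mod_cast h, rfl⟩
  · exfalso
    apply sqrt3_irr
    refine ⟨A / B, ?_⟩
    have hB' : (B : ℝ) ≠ 0 := by exact_mod_cast hB
    push_cast
    rw [div_eq_iff hB', h]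
    ring

lemma pow_cong (M : ℤ) (h56 : (5:ℤ)^6 ≡ 1 [ZMOD M]) (j u : ℤ) (e : ℕ)
    (hj : j = u * 5 ^ (6 * e)) : j ≡ u [ZMOD M] := by
  subst hj
  calc u * 5 ^ (6 * e) = u * (5 ^ 6) ^ e := by rw [pow_mul]
  _ ≡ u * 1 ^ e [ZMOD M] := Int.ModEq.mul_left u (h56.pow e)
  _ = u := by ring

lemma extract (u v x y : ℤ)
    (h : ((((u:ℝ) + (v:ℝ) * Real.sqrt 3), x, y) : ℝ × ℤ × ℤ) ∈ Eset) :
    x ≡ u [ZMOD 9] ∧ y ≡ v [ZMOD 3] := by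
  obtain ⟨i, j, k, h1, hx, hy⟩ := h
  have ht : (0:ℝ) < (5 : ℝ) ^ (6 * i) := zpow_pos (by norm_num) _
  rw [eq_div_iff (ne_of_gt ht)] at h1
  have hQ : (((j : ℚ) - u * 5 ^ (6*i) : ℚ) : ℝ)
      = (((u : ℚ) * 0 + (v * 5 ^ (6*i) - k) : ℚ) : ℝ) * Real.sqrt 3 := by
    push_cast
    linear_combination -h1
  obtain ⟨hA, hB⟩ := sqrt3_rat _ _ hQ
  simp only [mul_zero, zero_add] at hB
  have hA' : (j : ℚ) = u * 5 ^ (6*i) := by linarith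
  have hB' : (k : ℚ) = v * 5 ^ (6*i) := by linarith
  rcases le_or_gt 0 i with hi | hi
  · obtain ⟨e, rfl⟩ := Int.eq_ofNat_of_zero_le hi
    have hcast : (5:ℚ) ^ (6 * (e:ℤ)) = ((5:ℤ) ^ (6*e) : ℤ) := by
      rw [show 6 * (e:ℤ) = ((6*e : ℕ) : ℤ) by push_cast; ring, zpow_natCast]
      push_cast; ring
    rw [hcast] at hA' hB'
    have hj : j = u * 5 ^ (6*e) := by exact_mod_cast hA'
    have hk : k = v * 5 ^ (6*e) := by exact_mod_cast hB'
    exact ⟨hx.trans (pow_cong 9 (by decide) j u e hj),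
           hy.trans (pow_cong 3 (by decide) k v e hk)⟩
  · obtain ⟨e, rfl⟩ : ∃ e : ℕ, i = -(e:ℤ) := ⟨(-i).toNat, by omega⟩
    have h50 : ((5:ℚ) ^ (6*e)) ≠ 0 := by positivity
    have hcast : (5:ℚ) ^ (6 * -(e:ℤ)) = (((5:ℤ) ^ (6*e) : ℤ) : ℚ)⁻¹ := by
      rw [show 6 * -(e:ℤ) = -((6*e : ℕ) : ℤ) by push_cast; ring, zpow_neg, zpow_natCast]
      push_cast; ring
    rw [hcast] at hA' hB'
    have hu : u = j * 5 ^ (6*e) := by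
      have : (u : ℚ) = j * 5 ^ (6*e) := by
        rw [hA']; push_cast; field_simp
      exact_mod_cast this
    have hv : v = k * 5 ^ (6*e) := by
      have : (v : ℚ) = k * 5 ^ (6*e) := by
        rw [hB']; push_cast; field_simp
      exact_mod_cast this
    exact ⟨hx.trans (pow_cong 9 (by decide) u j e hu).symm,
           hy.trans (pow_cong 3 (by decide) v k e hv).symm⟩

/-- The positive cone `E₊ = {(r, x, y) ∈ E : r > 0} ∪ {(0, 0, 0)}`. -/
def Epos : Set (ℝ × ℤ × ℤ) :=
  {p | p ∈ Eset ∧ 0 < p.1} ∪ {0}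

/-- An order automorphism of `(E, E₊)`: an additive group automorphism of `E`
(a bijection of `E` onto itself which is additive on `E`) with `φ(E₊) = E₊`. -/
structure IsOrderAuto (φ : ℝ × ℤ × ℤ → ℝ × ℤ × ℤ) : Prop where
  bijOn : Set.BijOn φ Eset Eset
  addOn : ∀ p ∈ Eset, ∀ q ∈ Eset, φ (p + q) = φ p + φ q
  posEq : φ '' Epos = Epos

/-- If `φ` is an order automorphism of `(E, E₊)` with
`φ(r, x, y) = ((2 + √3)r, ax + by, cx + dy)` on `E`, then the matrix `(a b; c d)` is
congruent mod 9 to one of `(2 3; 1 2)`, `(2 3; 4 2)`, `(2 3; 7 2)`. -/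
theorem stmt_13 (φ : ℝ × ℤ × ℤ → ℝ × ℤ × ℤ) (hφ : IsOrderAuto φ) (a b c d : ℤ)
    (h : ∀ p ∈ Eset, φ p =
      ((2 + Real.sqrt 3) * p.1, a * p.2.1 + b * p.2.2, c * p.2.1 + d * p.2.2)) :
    (a ≡ 2 [ZMOD 9] ∧ b ≡ 3 [ZMOD 9] ∧ c ≡ 1 [ZMOD 9] ∧ d ≡ 2 [ZMOD 9]) ∨
    (a ≡ 2 [ZMOD 9] ∧ b ≡ 3 [ZMOD 9] ∧ c ≡ 4 [ZMOD 9] ∧ d ≡ 2 [ZMOD 9]) ∨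
    (a ≡ 2 [ZMOD 9] ∧ b ≡ 3 [ZMOD 9] ∧ c ≡ 7 [ZMOD 9] ∧ d ≡ 2 [ZMOD 9]) := by
  have hs3 : Real.sqrt 3 * Real.sqrt 3 = 3 := Real.mul_self_sqrt (by norm_num)
  have hsnn : (0:ℝ) ≤ Real.sqrt 3 := Real.sqrt_nonneg 3
  have hne : (2 + Real.sqrt 3 : ℝ) ≠ 0 := by positivity
  -- step 1: membership of basic points
  have hp1 : ((1:ℝ), (1:ℤ), (0:ℤ)) ∈ Eset := ⟨0, 1, 0, by norm_num, Int.ModEq.refl _, Int.ModEq.refl _⟩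
  have hp2 : ((Real.sqrt 3 : ℝ), (0:ℤ), (1:ℤ)) ∈ Eset := ⟨0, 0, 1, by norm_num, Int.ModEq.refl _, Int.ModEq.refl _⟩
  have hac : a ≡ 2 [ZMOD 9] ∧ c ≡ 1 [ZMOD 3] := by
    apply extract 2 1 a c
    have := hφ.bijOn.mapsTo hp1
    rw [h _ hp1] at this
    have e1 : (2 + Real.sqrt 3) * (1:ℝ) = ((2:ℤ):ℝ) + ((1:ℤ):ℝ) * Real.sqrt 3 := by
      push_cast; ring
    rw [e1] at this
    simpa using this
  have hbd : b ≡ 3 [ZMOD 9] ∧ d ≡ 2 [ZMOD 3] := by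
    apply extract 3 2 b d
    have := hφ.bijOn.mapsTo hp2
    rw [h _ hp2] at this
    have e1 : (2 + Real.sqrt 3) * Real.sqrt 3 = ((3:ℤ):ℝ) + ((2:ℤ):ℝ) * Real.sqrt 3 := by
      push_cast; linear_combination hs3
    rw [e1] at this
    simpa using this
  obtain ⟨ha, hc3⟩ := hac
  obtain ⟨hb, hd3⟩ := hbd
  -- step 2: surjectivity targets
  have hq1 : (((2:ℝ) + Real.sqrt 3, a + 9, c) : ℝ × ℤ × ℤ) ∈ Eset := by
    refine ⟨0, 2, 1, by norm_num, ?_, hc3⟩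
    exact (ha.add_right 9).trans (by decide)
  have hq2 : (((3:ℝ) + 2 * Real.sqrt 3, b, d + 3) : ℝ × ℤ × ℤ) ∈ Eset := by
    refine ⟨0, 3, 2, by norm_num, hb, ?_⟩
    exact (hd3.add_right 3).trans (by decide)
  obtain ⟨p, hpE, hpq⟩ := hφ.bijOn.surjOn hq1
  rw [h p hpE] at hpq
  simp only [Prod.mk.injEq] at hpq
  obtain ⟨e1, e2, e3⟩ := hpq
  have hp1eq : p.1 = 1 := by
    apply mul_left_cancel₀ hne
    rw [e1]; ring
  obtain ⟨hx1, hy1⟩ : p.2.1 ≡ 1 [ZMOD 9] ∧ p.2.2 ≡ 0 [ZMOD 3] := by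
    apply extract 1 0 p.2.1 p.2.2
    have hp1' : (((1:ℤ):ℝ) + ((0:ℤ):ℝ) * Real.sqrt 3) = p.1 := by rw [hp1eq]; push_cast; ring
    rw [hp1']
    exact hpE
  obtain ⟨p', hpE', hpq'⟩ := hφ.bijOn.surjOn hq2
  rw [h p' hpE'] at hpq'
  simp only [Prod.mk.injEq] at hpq'
  obtain ⟨f1, f2, f3⟩ := hpq'
  have hp2eq : p'.1 = Real.sqrt 3 := by
    apply mul_left_cancel₀ hne
    rw [f1]; linear_combination -hs3
  obtain ⟨hx2, hy2⟩ : p'.2.1 ≡ 0 [ZMOD 9] ∧ p'.2.2 ≡ 1 [ZMOD 3] := by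
    apply extract 0 1 p'.2.1 p'.2.2
    have hp2' : (((0:ℤ):ℝ) + ((1:ℤ):ℝ) * Real.sqrt 3) = p'.1 := by rw [hp2eq]; push_cast; ring
    rw [hp2']
    exact hpE'
  -- extract linear data
  obtain ⟨m, hm⟩ := hx1.dvd
  obtain ⟨n, hn⟩ := hy1.dvd
  obtain ⟨m', hm'⟩ := hx2.dvd
  obtain ⟨n', hn'⟩ := hy2.dvd
  -- hm : 1 - p.2.1 = 9*m, hn : 0 - p.2.2 = 3*n, hm' : 0 - p'.2.1 = 9*m', hn' : 1 - p'.2.2 = 3*n'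
  have hE1 : -9*a*m - 3*b*n = 9 := by linear_combination e2 + a*hm + b*hn
  have hE2 : -9*c*m - 3*d*n = 0 := by linear_combination e3 + c*hm + d*hn
  have hE3 : -9*a*m' - 3*b*n' = 0 := by linear_combination f2 + a*hm' + b*hn'
  have hE4 : -9*c*m' - 3*d*n' = 3 := by linear_combination f3 + c*hm' + d*hn'
  have key : (27:ℤ) * ((a*d - b*c) * (m*n' - m'*n)) =
      (-9*a*m - 3*b*n) * (-9*c*m' - 3*d*n') - (-9*a*m' - 3*b*n') * (-9*c*m - 3*d*n) := by
    ring
  rw [hE1, hE2, hE3, hE4] at key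
  have hprod : (a*d - b*c) * (m*n' - m'*n) = 1 := by
    apply mul_left_cancel₀ (show (27:ℤ) ≠ 0 by norm_num)
    rw [key]; ring
  have hD : a*d - b*c = 1 ∨ a*d - b*c = -1 := Int.eq_one_or_neg_one_of_mul_eq_one hprod
  -- congruence data as explicit equations
  obtain ⟨α, hα⟩ := ha.dvd
  obtain ⟨β, hβ⟩ := hb.dvd
  obtain ⟨γ, hγ⟩ := hc3.dvd
  obtain ⟨δ, hδ⟩ := hd3.dvd
  -- hα : 2 - a = 9*α, hβ : 3 - b = 9*β, hγ : 1 - c = 3*γ, hδ : 2 - d = 3*δ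
  have ha' : a = 2 - 9*α := by omega
  have hb' : b = 3 - 9*β := by omega
  have hc' : c = 1 - 3*γ := by omega
  have hd' : d = 2 - 3*δ := by omega
  have hmod3 : (3:ℤ) ∣ (a*d - b*c - 1) :=
    ⟨-2*δ - 6*α + 9*α*δ + 3*γ + 3*β - 9*β*γ, by rw [ha', hb', hc', hd']; ring⟩
  have hdet : a*d - b*c = 1 := by
    rcases hD with h1 | h1
    · exact h1
    · rw [h1] at hmod3; norm_num at hmod3
  have h2d : (9:ℤ) ∣ 2*d - 4 := by
    refine ⟨α*d - γ - β + 3*β*γ, ?_⟩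
    have hd1 : (2 - 9*α)*d - (3 - 9*β)*(1 - 3*γ) = 1 := by rw [← ha', ← hb', ← hc']; exact hdet
    linear_combination hd1
  have hd9 : d ≡ 2 [ZMOD 9] := by
    rw [Int.modEq_iff_dvd]
    omega
  have hc9 : c ≡ 1 [ZMOD 9] ∨ c ≡ 4 [ZMOD 9] ∨ c ≡ 7 [ZMOD 9] := by
    rw [Int.modEq_iff_dvd, Int.modEq_iff_dvd, Int.modEq_iff_dvd]
    omega
  rcases hc9 with h1 | h1 | h1
  · exact Or.inl ⟨ha, hb, h1, hd9⟩
  · exact Or.inr (Or.inl ⟨ha, hb, h1, hd9⟩)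
  · exact Or.inr (Or.inr ⟨ha, hb, h1, hd9⟩)
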